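/- arXiv:1411.4916 — 5 statements merged into one kernel-verified Lean document; each statement's English description precedes it below -/
import Mathlib

section
/- Let v_1,…,v_n be XOS valuations on M, let X* = (X*_1,…,X*_n) be an allocation, and for each i let a_i be an additive representative of v_i at X*_i. Define prices p(j) = (1/2)·a_i({j}) for j ∈ X*_i and p(j) = 0 for items j not allocated by X*. Then for every buyer arrival order π and every sequential consumption outcome Y under prices p, Σ_i v_i(Y_i) ≥ (1/2)·Σ_i v_i(X*_i). -/
open MeasureTheory Finset

/-- A monotone valuation normalized at the empty set. -/
def IsValuation {M : Type*} [Fintype M] [DecidableEq M] (v : Finset M → ℝ) : Prop :=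
  v ∅ = 0 ∧ ∀ S T : Finset M, S ⊆ T → v S ≤ v T

/-- An additive set function with nonnegative item values. -/
def IsAdditiveFn {M : Type*} [Fintype M] [DecidableEq M] (a : Finset M → ℝ) : Prop :=
  (∀ j : M, 0 ≤ a {j}) ∧ ∀ S : Finset M, a S = ∑ j ∈ S, a {j}

/-- An XOS valuation: the pointwise maximum of a finite nonempty family of
additive functions. -/
def IsXOS {M : Type*} [Fintype M] [DecidableEq M] (v : Finset M → ℝ) : Prop :=
  ∃ (k : ℕ) (a : Fin (k + 1) → Finset M → ℝ),
    (∀ i, IsAdditiveFn (a i)) ∧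
      ∀ S : Finset M, IsGreatest (Set.range fun i => a i S) (v S)

/-- `a` is an additive representative of the valuation `v` at the set `X`. -/
def IsAdditiveRep {M : Type*} [Fintype M] [DecidableEq M]
    (v a : Finset M → ℝ) (X : Finset M) : Prop :=
  IsAdditiveFn a ∧ (∀ S : Finset M, a S ≤ v S) ∧ a X = v X

/-- An allocation: pairwise disjoint bundles. -/
def IsAllocation {M : Type*} [Fintype M] [DecidableEq M] {n : ℕ}
    (X : Fin n → Finset M) : Prop :=
  ∀ i j : Fin n, i ≠ j → Disjoint (X i) (X j)

/-- Quasilinear utility of bundle `S` at item prices `p`. -/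
def util {M : Type*} [Fintype M] [DecidableEq M]
    (v : Finset M → ℝ) (p : M → ℝ) (S : Finset M) : ℝ :=
  v S - ∑ j ∈ S, p j

/-- Items still available to buyer `i` when buyers are processed in the
arrival order `π` (smaller `π`-value arrives earlier). -/
def availItems {M : Type*} [Fintype M] [DecidableEq M] {n : ℕ}
    (Y : Fin n → Finset M) (π : Equiv.Perm (Fin n)) (i : Fin n) : Finset M :=
  Finset.univ \ (Finset.univ.filter fun j => π j < π i).biUnion Y

/-- `Y` is a sequential consumption outcome at prices `p` and arrival order `π`:
each buyer receives a utility-maximizing bundle among the remaining items. -/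
def IsSeqOutcome {M : Type*} [Fintype M] [DecidableEq M] {n : ℕ}
    (v : Fin n → Finset M → ℝ) (p : M → ℝ)
    (π : Equiv.Perm (Fin n)) (Y : Fin n → Finset M) : Prop :=
  ∀ i : Fin n, Y i ⊆ availItems Y π i ∧
    ∀ S ⊆ availItems Y π i, util (v i) p S ≤ util (v i) p (Y i)

/-- `SW_j`: welfare contribution of item `j` under allocation `X` with additive
representatives `a` (equals `a i {j}` for the buyer `i` receiving `j`, and `0`
if `j` is unallocated). -/
def SWcontrib {M : Type*} [Fintype M] [DecidableEq M] {n : ℕ}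
    (X : Fin n → Finset M) (a : Fin n → Finset M → ℝ) (j : M) : ℝ :=
  ∑ i, if j ∈ X i then a i {j} else 0


/-!
Split the welfare of `X*` at the set of sold items. An item of `X*_i` that nobody bought was
still available to buyer `i` on arrival, so by optimality of `Y_i` and `a_i ≤ v_i`, buyer `i`'s
utility is at least the price-slack `(1/2)·a_i` of her unsold items of `X*_i`. The sold items of
the `X*_i` are worth exactly twice their prices, and the revenue is at most the total price of
the sold items. Adding, utilities plus revenue (which is the welfare of `Y`) is at least half the
welfare of `X*`.
-/

section Additive

variable {M : Type*} [Fintype M] [DecidableEq M] {a : Finset M → ℝ}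

theorem IsAdditiveFn.inter_add_sdiff (ha : IsAdditiveFn a) (X T : Finset M) :
    a (X ∩ T) + a (X \ T) = a X := by
  rw [ha.2 (X ∩ T), ha.2 (X \ T), ha.2 X, sum_inter_add_sum_sdiff]

theorem IsAdditiveFn.half_le_util {v : Finset M → ℝ} {p : M → ℝ} {S : Finset M}
    (ha : IsAdditiveFn a) (hav : a S ≤ v S) (hp : ∀ j ∈ S, p j = 1 / 2 * a {j}) :
    1 / 2 * a S ≤ util v p S := by
  have hprice : ∑ j ∈ S, p j = 1 / 2 * a S := by
    rw [ha.2 S, mul_sum]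
    exact sum_congr rfl hp
  rw [util, hprice]
  linarith

end Additive

section Prices

variable {M : Type*} [Fintype M] [DecidableEq M] {n : ℕ} {X : Fin n → Finset M}
  {a : Fin n → Finset M → ℝ} {p : M → ℝ}

theorem price_nonneg (ha : ∀ i, IsAdditiveFn (a i))
    (hpX : ∀ i, ∀ j ∈ X i, p j = 1 / 2 * a i {j}) (hpfree : ∀ j, (∀ i, j ∉ X i) → p j = 0)
    (j : M) : 0 ≤ p j := by
  by_cases hj : ∃ i, j ∈ X i
  · obtain ⟨i, hji⟩ := hj
    rw [hpX i j hji]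
    exact mul_nonneg (by norm_num) ((ha i).1 j)
  · push Not at hj
    exact (hpfree j hj).ge

theorem sum_half_inter_le_sum_price (hX : IsAllocation X) (ha : ∀ i, IsAdditiveFn (a i))
    (hpX : ∀ i, ∀ j ∈ X i, p j = 1 / 2 * a i {j}) (hp0 : ∀ j, 0 ≤ p j) (T : Finset M) :
    ∑ i, 1 / 2 * a i (X i ∩ T) ≤ ∑ j ∈ T, p j := by
  have hdisj : ((univ : Finset (Fin n)) : Set (Fin n)).PairwiseDisjoint (fun i => X i ∩ T) :=
    fun i _ k _ hik => (hX i k hik).mono inter_subset_left inter_subset_left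
  calc ∑ i, 1 / 2 * a i (X i ∩ T)
      = ∑ i, ∑ j ∈ X i ∩ T, p j := by
        refine sum_congr rfl fun i _ => ?_
        rw [(ha i).2, mul_sum]
        exact sum_congr rfl fun j hj => (hpX i j (mem_inter.1 hj).1).symm
    _ = ∑ j ∈ univ.biUnion (fun i => X i ∩ T), p j := (sum_biUnion hdisj).symm
    _ ≤ ∑ j ∈ T, p j :=
        sum_le_sum_of_subset_of_nonneg (biUnion_subset.2 fun _ _ => inter_subset_right)
          fun j _ _ => hp0 j

end Prices

section SeqOutcome

variable {M : Type*} [Fintype M] [DecidableEq M] {n : ℕ} {v : Fin n → Finset M → ℝ}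
  {p : M → ℝ} {π : Equiv.Perm (Fin n)} {Y : Fin n → Finset M}

theorem mem_availItems {i : Fin n} {j : M} :
    j ∈ availItems Y π i ↔ ∀ k, π k < π i → j ∉ Y k := by
  simp [availItems]

theorem sum_util_add_sum_price {S : Fin n → Finset M}
    (hS : ((univ : Finset (Fin n)) : Set (Fin n)).PairwiseDisjoint S) :
    ∑ i, util (v i) p (S i) + ∑ j ∈ univ.biUnion S, p j = ∑ i, v i (S i) := by
  rw [sum_biUnion hS, ← sum_add_distrib]
  exact sum_congr rfl fun i _ => sub_add_cancel _ _

namespace IsSeqOutcome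

variable (hY : IsSeqOutcome v p π Y)
include hY

theorem disjoint_of_lt {i k : Fin n} (hik : π i < π k) : Disjoint (Y i) (Y k) :=
  disjoint_left.2 fun _ hji hjk => mem_availItems.1 ((hY k).1 hjk) i hik hji

theorem pairwiseDisjoint : ((univ : Finset (Fin n)) : Set (Fin n)).PairwiseDisjoint Y := by
  intro i _ k _ hik
  rcases (π.injective.ne hik).lt_or_gt with h | h
  · exact hY.disjoint_of_lt h
  · exact (hY.disjoint_of_lt h).symm

theorem util_le_of_disjoint_sold (i : Fin n) {S : Finset M}
    (hS : Disjoint S (univ.biUnion Y)) : util (v i) p S ≤ util (v i) p (Y i) := by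
  refine (hY i).2 S fun j hj => mem_availItems.2 fun k _ hjk => ?_
  exact disjoint_left.1 hS hj (mem_biUnion.2 ⟨k, mem_univ k, hjk⟩)

end IsSeqOutcome

end SeqOutcome

theorem full_information_half_welfare_XOS_general
    {M : Type*} [Fintype M] [DecidableEq M] {n : ℕ}
    (v : Fin n → Finset M → ℝ)
    (Xs : Fin n → Finset M) (hXs : IsAllocation Xs)
    (a : Fin n → Finset M → ℝ)
    (ha : ∀ i, IsAdditiveRep (v i) (a i) (Xs i))
    (p : M → ℝ)
    (hpalloc : ∀ i : Fin n, ∀ j ∈ Xs i, p j = (1 / 2) * a i {j})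
    (hpfree : ∀ j : M, (∀ i, j ∉ Xs i) → p j = 0)
    (π : Equiv.Perm (Fin n)) (Y : Fin n → Finset M)
    (hY : IsSeqOutcome v p π Y) :
    (1 / 2) * ∑ i, v i (Xs i) ≤ ∑ i, v i (Y i) := by
  set sold := univ.biUnion Y
  have hadd : ∀ i, IsAdditiveFn (a i) := fun i => (ha i).1
  have hp0 := price_nonneg hadd hpalloc hpfree
  have hunsold : ∀ i, 1 / 2 * a i (Xs i \ sold) ≤ util (v i) p (Y i) := fun i =>
    ((hadd i).half_le_util ((ha i).2.1 _) fun j hj => hpalloc i j (mem_sdiff.1 hj).1).trans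
      (hY.util_le_of_disjoint_sold i sdiff_disjoint)
  calc (1 / 2) * ∑ i, v i (Xs i)
      = ∑ i, 1 / 2 * a i (Xs i \ sold) + ∑ i, 1 / 2 * a i (Xs i ∩ sold) := by
        rw [mul_sum, ← sum_add_distrib]
        refine sum_congr rfl fun i _ => ?_
        rw [← mul_add, add_comm, (hadd i).inter_add_sdiff, (ha i).2.2]
    _ ≤ ∑ i, util (v i) p (Y i) + ∑ j ∈ sold, p j :=
        add_le_add (sum_le_sum fun i _ => hunsold i)
          (sum_half_inter_le_sum_price hXs hadd hpalloc hp0 sold)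
    _ = ∑ i, v i (Y i) := sum_util_add_sum_price hY.pairwiseDisjoint

/-- full-information version. If each buyer has an XOS
valuation, `X*` is an allocation with additive representatives `a_i`, and each
item `j ∈ X*_i` is priced at `(1/2)·a_i({j})` (unallocated items priced `0`),
then every sequential consumption outcome, for every arrival order, obtains at
least half the welfare of `X*`. -/
theorem full_information_half_welfare_XOS
    {M : Type*} [Fintype M] [DecidableEq M] {n : ℕ}
    (v : Fin n → Finset M → ℝ)
    (hv : ∀ i, IsValuation (v i) ∧ IsXOS (v i))
    (Xs : Fin n → Finset M) (hXs : IsAllocation Xs)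
    (a : Fin n → Finset M → ℝ)
    (ha : ∀ i, IsAdditiveRep (v i) (a i) (Xs i))
    (p : M → ℝ)
    (hpalloc : ∀ i : Fin n, ∀ j ∈ Xs i, p j = (1 / 2) * a i {j})
    (hpfree : ∀ j : M, (∀ i, j ∉ Xs i) → p j = 0)
    (π : Equiv.Perm (Fin n)) (Y : Fin n → Finset M)
    (hY : IsSeqOutcome v p π Y) :
    (1 / 2) * ∑ i, v i (Xs i) ≤ ∑ i, v i (Y i) :=
  full_information_half_welfare_XOS_general v Xs hXs a ha p hpalloc hpfree π Y hY
end

section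
/- Let v_1,…,v_n be independent, integrable, nonnegative real random variables and set the posted price p = (1/2)·E[max_i v_i]. In the single-item posted-price sale in a fixed order 1,…,n, the item is sold to the first buyer i with v_i > p (if any), and the realized welfare W equals the value of the purchasing buyer (W = 0 if no buyer purchases). Then E[W] ≥ (1/2)·E[max_i v_i]. -/
/-!
Write `q` for the probability that nobody buys. Pointwise, the welfare is
`p · 1{sold} + ∑ᵢ (vᵢ - p)⁺ · 1{vⱼ ≤ p for all j < i}`: the buyer who purchases has value
`p + (vᵢ - p)⁺`, earlier buyers have no surplus and later ones find the item gone. The event in the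
`i`-th term depends only on earlier buyers, so by independence the term has expectation
`E(vᵢ - p)⁺ · P(vⱼ ≤ p, j < i) ≥ E(vᵢ - p)⁺ · q`. As `∑ᵢ (vᵢ - p)⁺ ≥ maxᵢ vᵢ - p`, this gives
`E W ≥ (1 - q) p + q (E maxᵢ vᵢ - p)`, which equals `p` whatever `q` is once `p = E maxᵢ vᵢ / 2`.
-/

open MeasureTheory ProbabilityTheory Finset

section

variable {Ω : Type*} [MeasurableSpace Ω] {μ : Measure Ω}

theorem MeasureTheory.Integrable.finset_sup' {ι β : Type*} [NormedAddCommGroup β] [Lattice β]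
    [HasSolidNorm β] [IsOrderedAddMonoid β] {s : Finset ι} (hs : s.Nonempty) {f : ι → Ω → β}
    (hf : ∀ i ∈ s, Integrable (f i) μ) : Integrable (fun ω => s.sup' hs (f · ω)) μ := by
  simp_rw [← Finset.sup'_apply]
  exact sup'_induction (p := fun g : Ω → β => Integrable g μ) hs f (fun _ hf _ hg => hf.sup hg) hf

namespace ProbabilityTheory

theorem iIndepFun.indepFun_pi_of_notMem {ι β : Type*} [MeasurableSpace β] {f : ι → Ω → β}
    (h : iIndepFun f μ) (hf : ∀ i, Measurable (f i)) {S : Finset ι} {i : ι} (hi : i ∉ S) :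
    IndepFun (f i) (fun ω (j : S) => f j ω) μ :=
  (h.indepFun_finset {i} S (disjoint_singleton_left.mpr hi) hf).comp
    (measurable_pi_apply (⟨i, mem_singleton_self i⟩ : ({i} : Finset ι))) measurable_id

theorem IndepFun.integral_indicator_preimage {β : Type*} [MeasurableSpace β] {X : Ω → ℝ}
    {Y : Ω → β} (h : IndepFun X Y μ) (hX : AEStronglyMeasurable X μ) (hY : Measurable Y)
    {T : Set β} (hT : MeasurableSet T) :
    ∫ ω, (Y ⁻¹' T).indicator X ω ∂μ = (∫ ω, X ω ∂μ) * μ.real (Y ⁻¹' T) := by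
  have hprod : (Y ⁻¹' T).indicator X = fun ω => X ω * T.indicator 1 (Y ω) := by
    ext ω
    by_cases hω : Y ω ∈ T <;> simp [hω]
  rw [hprod, ← integral_indicator_one (hY hT)]
  exact (h.comp measurable_id (measurable_one.indicator hT)).integral_fun_mul_eq_mul_integral
    hX ((measurable_one.indicator hT).comp hY).aestronglyMeasurable

end ProbabilityTheory

section PostedPrice

variable {ι : Type*} [Fintype ι] {X : ι → Ω → ℝ}

theorem sup'_sub_le_sum_max_sub [Nonempty ι] (x : ι → ℝ) (p : ℝ) :
    univ.sup' univ_nonempty x - p ≤ ∑ i, max (x i - p) 0 := by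
  obtain ⟨i, -, hi⟩ := exists_mem_eq_sup' univ_nonempty x
  rw [hi]
  exact (le_max_left _ _).trans
    (single_le_sum (f := fun i => max (x i - p) 0) (fun _ _ => le_max_right _ _) (mem_univ i))

theorem integral_sup'_sub_le_sum_integral_max_sub [IsProbabilityMeasure μ] [Nonempty ι]
    (hint : ∀ i, Integrable (X i) μ) (p : ℝ) :
    ∫ ω, univ.sup' univ_nonempty (X · ω) ∂μ - p ≤ ∑ i, ∫ ω, max (X i ω - p) 0 ∂μ := by
  have hsup := Integrable.finset_sup' univ_nonempty fun i _ => hint i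
  have hsurplus : ∀ i, Integrable (fun ω => max (X i ω - p) 0) μ := fun i =>
    ((hint i).sub (integrable_const p)).pos_part
  calc ∫ ω, univ.sup' univ_nonempty (X · ω) ∂μ - p
      = ∫ ω, (univ.sup' univ_nonempty (X · ω) - p) ∂μ := by
        rw [integral_sub hsup (integrable_const p), integral_const, probReal_univ, one_smul]
    _ ≤ ∫ ω, ∑ i, max (X i ω - p) 0 ∂μ :=
        integral_mono (hsup.sub (integrable_const p))
          (integrable_finsetSum _ fun i _ => hsurplus i)
          fun ω => sup'_sub_le_sum_max_sub (X · ω) p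
    _ = ∑ i, ∫ ω, max (X i ω - p) 0 ∂μ := integral_finsetSum _ fun i _ => hsurplus i

variable [LinearOrder ι]

noncomputable def postedPriceWelfare (p : ℝ) (x : ι → ℝ) : ℝ :=
  if h : (univ.filter fun i => p < x i).Nonempty then x ((univ.filter fun i => p < x i).min' h)
  else 0

theorem postedPriceWelfare_eq_add_sum (p : ℝ) (x : ι → ℝ) :
    postedPriceWelfare p x = {y : ι → ℝ | ∃ i, p < y i}.indicator (fun _ => p) x +
      ∑ i, {y : ι → ℝ | ∀ j < i, y j ≤ p}.indicator (fun y => max (y i - p) 0) x := by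
  unfold postedPriceWelfare
  split_ifs with h
  · set i₀ := (univ.filter fun i => p < x i).min' h
    have hi₀ : p < x i₀ := (mem_filter.mp (min'_mem _ h)).2
    have before : ∀ j < i₀, x j ≤ p := fun j hj =>
      not_lt.mp fun hpj => (min'_le _ j (by simpa using hpj)).not_gt hj
    have sold : x ∈ {y : ι → ℝ | ∃ i, p < y i} := ⟨i₀, hi₀⟩
    rw [sum_eq_single i₀, Set.indicator_of_mem sold,
      Set.indicator_of_mem (s := {y : ι → ℝ | ∀ j < i₀, y j ≤ p}) before,
      max_eq_left (sub_nonneg.mpr hi₀.le)]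
    · ring
    · intro j _ hj
      rcases hj.lt_or_gt with hlt | hgt
      · simp [max_eq_right (sub_nonpos.mpr (before j hlt))]
      · exact Set.indicator_of_notMem (fun hx => (hx i₀ hgt).not_gt hi₀) _
    · simp
  · have hall : ∀ i, x i ≤ p := fun i => not_lt.mp fun hi => h ⟨i, by simpa using hi⟩
    simp [hall]

theorem integral_indicator_max_sub_of_iIndepFun (hX : iIndepFun X μ)
    (hmeas : ∀ i, Measurable (X i)) (p : ℝ) (i : ι) :
    ∫ ω, {ω | ∀ j < i, X j ω ≤ p}.indicator (fun ω => max (X i ω - p) 0) ω ∂μ =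
      (∫ ω, max (X i ω - p) 0 ∂μ) * μ.real {ω | ∀ j < i, X j ω ≤ p} := by
  have hpre : {ω | ∀ j < i, X j ω ≤ p} =
      (fun ω (j : univ.filter (· < i)) => X j ω) ⁻¹' {v | ∀ j, v j ≤ p} := by
    ext ω
    simp
  rw [hpre]
  exact ((hX.indepFun_pi_of_notMem hmeas (by simp)).comp
    ((measurable_id.sub_const p).max measurable_const) measurable_id).integral_indicator_preimage
    (((hmeas i).sub_const p).max measurable_const).aestronglyMeasurable
    (measurable_pi_lambda _ fun j => hmeas j) (by measurability)

theorem integral_postedPriceWelfare [IsFiniteMeasure μ] (hX : iIndepFun X μ)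
    (hmeas : ∀ i, Measurable (X i)) (hint : ∀ i, Integrable (X i) μ) (p : ℝ) :
    ∫ ω, postedPriceWelfare p (X · ω) ∂μ =
      p * μ.real {ω | ∃ i, p < X i ω} +
        ∑ i, (∫ ω, max (X i ω - p) 0 ∂μ) * μ.real {ω | ∀ j < i, X j ω ≤ p} := by
  have hsold : MeasurableSet {ω | ∃ i, p < X i ω} := by measurability
  have havail : ∀ i, MeasurableSet {ω | ∀ j < i, X j ω ≤ p} := by measurability
  have hterm : ∀ i, Integrable
      ({ω | ∀ j < i, X j ω ≤ p}.indicator fun ω => max (X i ω - p) 0) μ := fun i =>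
    ((hint i).sub (integrable_const p)).pos_part.indicator (havail i)
  calc ∫ ω, postedPriceWelfare p (X · ω) ∂μ
      = ∫ ω, ({ω | ∃ i, p < X i ω}.indicator (fun _ => p) ω +
          ∑ i, {ω | ∀ j < i, X j ω ≤ p}.indicator (fun ω => max (X i ω - p) 0) ω) ∂μ :=
        integral_congr_ae (ae_of_all _ fun ω => postedPriceWelfare_eq_add_sum p (X · ω))
    _ = _ := by
      rw [integral_add ((integrable_const p).indicator hsold)
          (integrable_finsetSum _ fun i _ => hterm i),
        integral_finsetSum _ fun i _ => hterm i, integral_indicator_const _ hsold, smul_eq_mul,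
        mul_comm]
      simp_rw [integral_indicator_max_sub_of_iIndepFun hX hmeas]

theorem le_integral_postedPriceWelfare [IsProbabilityMeasure μ] [Nonempty ι] (hX : iIndepFun X μ)
    (hmeas : ∀ i, Measurable (X i)) (hint : ∀ i, Integrable (X i) μ) (p : ℝ) :
    (1 - μ.real {ω | ∀ i, X i ω ≤ p}) * p +
        μ.real {ω | ∀ i, X i ω ≤ p} * (∫ ω, univ.sup' univ_nonempty (X · ω) ∂μ - p) ≤
      ∫ ω, postedPriceWelfare p (X · ω) ∂μ := by
  set q := μ.real {ω | ∀ i, X i ω ≤ p}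
  have hsold : μ.real {ω | ∃ i, p < X i ω} = 1 - q := by
    rw [← probReal_compl_eq_one_sub (by measurability)]
    congr 1
    ext ω
    simp
  have havail : ∀ i, q ≤ μ.real {ω | ∀ j < i, X j ω ≤ p} := fun i =>
    measureReal_mono fun ω hω j _ => hω j
  calc (1 - q) * p + q * (∫ ω, univ.sup' univ_nonempty (X · ω) ∂μ - p)
      ≤ (1 - q) * p + ∑ i, (∫ ω, max (X i ω - p) 0 ∂μ) * q := by
        rw [← sum_mul, mul_comm q]
        gcongr
        exact integral_sup'_sub_le_sum_integral_max_sub hint p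
    _ ≤ (1 - q) * p + ∑ i, (∫ ω, max (X i ω - p) 0 ∂μ) * μ.real {ω | ∀ j < i, X j ω ≤ p} := by
        gcongr with i
        exact havail i
    _ = ∫ ω, postedPriceWelfare p (X · ω) ∂μ := by
        rw [integral_postedPriceWelfare hX hmeas hint, hsold, mul_comm p]

end PostedPrice

end

theorem single_item_posted_price_half_general
    {Ω : Type*} [MeasurableSpace Ω] (μ : Measure Ω) [IsProbabilityMeasure μ]
    {n : ℕ} [NeZero n]
    (X : Fin n → Ω → ℝ)
    (hmeas : ∀ i, Measurable (X i))
    (hindep : ProbabilityTheory.iIndepFun X μ)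
    (hint : ∀ i, Integrable (X i) μ)
    (p : ℝ)
    (hp : p = (1 / 2) *
      ∫ ω, (Finset.univ.sup' Finset.univ_nonempty fun i => X i ω) ∂μ)
    (W : Ω → ℝ)
    (hW : ∀ ω,
      W ω = if h : (Finset.univ.filter fun i => p < X i ω).Nonempty
        then X ((Finset.univ.filter fun i => p < X i ω).min' h) ω
        else 0) :
    (1 / 2) * (∫ ω, (Finset.univ.sup' Finset.univ_nonempty fun i => X i ω) ∂μ) ≤
      ∫ ω, W ω ∂μ := by
  obtain rfl : W = fun ω => postedPriceWelfare p (X · ω) := funext hW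
  set M := ∫ ω, univ.sup' univ_nonempty (X · ω) ∂μ
  set q := μ.real {ω | ∀ i, X i ω ≤ p}
  calc 1 / 2 * M = (1 - q) * p + q * (M - p) := by rw [hp]; ring
    _ ≤ _ := le_integral_postedPriceWelfare hindep hmeas hint p

/-- single-item prophet inequality via a posted price.
For independent, integrable, nonnegative values `v_1,…,v_n` and posted price
`p = (1/2)·E[max_i v_i]`, selling the item to the first buyer (in the fixed
order `0,1,…,n-1`) whose value strictly exceeds `p` yields expected welfare at
least `(1/2)·E[max_i v_i]`. -/
theorem single_item_posted_price_half
    {Ω : Type*} [MeasurableSpace Ω] (μ : Measure Ω) [IsProbabilityMeasure μ]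
    {n : ℕ} [NeZero n]
    (X : Fin n → Ω → ℝ)
    (hmeas : ∀ i, Measurable (X i))
    (hindep : ProbabilityTheory.iIndepFun X μ)
    (hint : ∀ i, Integrable (X i) μ)
    (hnonneg : ∀ i ω, 0 ≤ X i ω)
    (p : ℝ)
    (hp : p = (1 / 2) *
      ∫ ω, (Finset.univ.sup' Finset.univ_nonempty fun i => X i ω) ∂μ)
    (W : Ω → ℝ)
    (hW : ∀ ω,
      W ω = if h : (Finset.univ.filter fun i => p < X i ω).Nonempty
        then X ((Finset.univ.filter fun i => p < X i ω).min' h) ω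
        else 0) :
    (1 / 2) * (∫ ω, (Finset.univ.sup' Finset.univ_nonempty fun i => X i ω) ∂μ) ≤
      ∫ ω, W ω ∂μ :=
  single_item_posted_price_half_general μ X hmeas hindep hint p hp W hW
end

section
/- Let v be a monotone valuation on M, let X ⊆ M, and let g, with hypergraph weights w, be a PH-k representative of v at X. Let α > 0 and for each item j ∈ X define p(j) = (1/α)·Σ_{T : j∈T⊆X} w(T)/|T|. Then for every Q ⊆ X: v(X∖Q) + α·k·Σ_{j∈Q} p(j) ≥ v(X). -/
open MeasureTheory Finset

/-- Hypergraph weights of a PH-`k` function: nonnegative, supported on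
hyperedges of cardinality at most `k`. -/
def PHWeights {M : Type*} [Fintype M] [DecidableEq M] (k : ℕ) (w : Finset M → ℝ) : Prop :=
  (∀ T : Finset M, 0 ≤ w T) ∧ ∀ T : Finset M, k < T.card → w T = 0

/-- The set function induced by hypergraph weights `w`:
`g(S) = Σ_{∅ ≠ T ⊆ S} w(T)`. -/
def PHfun {M : Type*} [Fintype M] [DecidableEq M] (w : Finset M → ℝ) (S : Finset M) : ℝ :=
  ∑ T ∈ S.powerset.erase ∅, w T

/-- An MPH-`k` valuation: pointwise maximum of a nonempty family of PH-`k`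
functions. -/
def IsMPH {M : Type*} [Fintype M] [DecidableEq M] (k : ℕ) (v : Finset M → ℝ) : Prop :=
  ∃ (ι : Type) (_ : Nonempty ι) (w : ι → Finset M → ℝ),
    (∀ l, PHWeights k (w l)) ∧
      ∀ S : Finset M, IsGreatest (Set.range fun l => PHfun (w l) S) (v S)

/-- `w` are the weights of a PH-`k` representative of `v` at `X`. -/
def IsPHRep {M : Type*} [Fintype M] [DecidableEq M]
    (k : ℕ) (v w : Finset M → ℝ) (X : Finset M) : Prop :=
  PHWeights k w ∧ (∀ S : Finset M, PHfun w S ≤ v S) ∧ PHfun w X = v X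

/-- The full-information MPH item price `p_j(v)`:
`(1/2)·Σ_{T : j ∈ T ⊆ X_i} w_i(T)/|T|` for the buyer `i` with `j ∈ X_i`,
and `0` if `j` is unallocated. -/
noncomputable def MPHitemPrice {M : Type*} [Fintype M] [DecidableEq M] {n : ℕ}
    (X : Fin n → Finset M) (w : Fin n → Finset M → ℝ) (j : M) : ℝ :=
  ∑ i, if j ∈ X i then
      (1/2) * ∑ T ∈ (X i).powerset.filter (fun T => j ∈ T), w i T / (T.card : ℝ)
    else 0

/-- Lemma: PH-`k` prices cover the marginal loss. If `w` are
the weights of a PH-`k` representative of a monotone valuation `v` at `X`,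
`α > 0`, and `p j = (1/α)·Σ_{T : j ∈ T ⊆ X} w(T)/|T|` for `j ∈ X`, then for
every `Q ⊆ X`: `v(X∖Q) + α·k·Σ_{j∈Q} p j ≥ v(X)`. -/
theorem ph_prices_cover_marginal_loss
    {M : Type*} [Fintype M] [DecidableEq M]
    (k : ℕ) (hk : 1 ≤ k)
    (v w : Finset M → ℝ) (X : Finset M)
    (hv : IsValuation v)
    (hrep : IsPHRep k v w X)
    (α : ℝ) (hα : 0 < α)
    (p : M → ℝ)
    (hp : ∀ j ∈ X,
      p j = (1 / α) * ∑ T ∈ X.powerset.filter (fun T => j ∈ T), w T / (T.card : ℝ)) :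
    ∀ Q ⊆ X, v X ≤ v (X \ Q) + α * (k : ℝ) * ∑ j ∈ Q, p j := by
  intro Q hQ
  obtain ⟨⟨hw0, hwk⟩, hle, heq⟩ := hrep
  have hsub : (X \ Q).powerset.erase ∅ ⊆ X.powerset.erase ∅ := by
    intro T hT
    simp only [Finset.mem_erase, Finset.mem_powerset] at *
    exact ⟨hT.1, hT.2.trans Finset.sdiff_subset⟩
  have hsplit : PHfun w X =
      (∑ T ∈ X.powerset.erase ∅ \ (X \ Q).powerset.erase ∅, w T) + PHfun w (X \ Q) := by
    rw [PHfun, PHfun, ← Finset.sum_sdiff hsub]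
  have hpsum : α * ∑ j ∈ Q, p j
      = ∑ T ∈ X.powerset, ((Q ∩ T).card : ℝ) * (w T / (T.card : ℝ)) := by
    rw [Finset.mul_sum]
    have h1 : ∀ j ∈ Q, α * p j = ∑ T ∈ X.powerset, if j ∈ T then w T / (T.card : ℝ) else 0 := by
      intro j hj
      rw [hp j (hQ hj), ← mul_assoc, mul_one_div_cancel hα.ne', one_mul, Finset.sum_filter]
    rw [Finset.sum_congr rfl h1, Finset.sum_comm]
    refine Finset.sum_congr rfl fun T hT => ?_
    rw [← Finset.sum_filter, Finset.sum_const, Finset.filter_mem_eq_inter, nsmul_eq_mul]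
  have key : (∑ T ∈ X.powerset.erase ∅ \ (X \ Q).powerset.erase ∅, w T)
      ≤ ∑ T ∈ X.powerset, (k : ℝ) * (((Q ∩ T).card : ℝ) * (w T / (T.card : ℝ))) := by
    have hDsub : X.powerset.erase ∅ \ (X \ Q).powerset.erase ∅ ⊆ X.powerset := by
      intro T hT
      have := (Finset.mem_sdiff.mp hT).1
      exact Finset.mem_of_mem_erase this
    calc (∑ T ∈ X.powerset.erase ∅ \ (X \ Q).powerset.erase ∅, w T)
        ≤ ∑ T ∈ X.powerset.erase ∅ \ (X \ Q).powerset.erase ∅,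
            (k : ℝ) * (((Q ∩ T).card : ℝ) * (w T / (T.card : ℝ))) := by
          refine Finset.sum_le_sum fun T hT => ?_
          obtain ⟨hT1, hT2⟩ := Finset.mem_sdiff.mp hT
          have hTne : T ≠ ∅ := (Finset.mem_erase.mp hT1).1
          have hTX : T ⊆ X := Finset.mem_powerset.mp (Finset.mem_erase.mp hT1).2
          have hnsub : ¬ T ⊆ X \ Q := by
            intro h
            exact hT2 (Finset.mem_erase.mpr ⟨hTne, Finset.mem_powerset.mpr h⟩)
          have hQT : (Q ∩ T).Nonempty := by
            by_contra h
            apply hnsub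
            intro x hx
            rw [Finset.not_nonempty_iff_eq_empty] at h
            refine Finset.mem_sdiff.mpr ⟨hTX hx, fun hxQ => ?_⟩
            have : x ∈ Q ∩ T := Finset.mem_inter.mpr ⟨hxQ, hx⟩
            simp [h] at this
          have hcard1 : (1 : ℝ) ≤ ((Q ∩ T).card : ℝ) := by
            exact_mod_cast Finset.card_pos.mpr hQT
          have hTcard : 0 < (T.card : ℝ) := by
            exact_mod_cast Finset.card_pos.mpr (Finset.nonempty_iff_ne_empty.mpr hTne)
          by_cases hbig : k < T.card
          · rw [hwk T hbig]
            simp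
          · push_neg at hbig
            have hkc : (T.card : ℝ) ≤ (k : ℝ) := by exact_mod_cast hbig
            have hw : 0 ≤ w T := hw0 T
            rw [← sub_nonneg]
            have : (k : ℝ) * (((Q ∩ T).card : ℝ) * (w T / (T.card : ℝ))) - w T
                = ((k : ℝ) * ((Q ∩ T).card : ℝ) - (T.card : ℝ)) * (w T / (T.card : ℝ)) := by
              field_simp
            rw [this]
            apply mul_nonneg
            · nlinarith
            · positivity
      _ ≤ ∑ T ∈ X.powerset, (k : ℝ) * (((Q ∩ T).card : ℝ) * (w T / (T.card : ℝ))) := by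
          refine Finset.sum_le_sum_of_subset_of_nonneg hDsub fun T hT _ => ?_
          have hw := hw0 T
          positivity
  have hfin : v X ≤ v (X \ Q) + (k : ℝ) * (α * ∑ j ∈ Q, p j) := by
    have h2 : PHfun w (X \ Q) ≤ v (X \ Q) := hle _
    have h3 : (k : ℝ) * (α * ∑ j ∈ Q, p j)
        = ∑ T ∈ X.powerset, (k : ℝ) * (((Q ∩ T).card : ℝ) * (w T / (T.card : ℝ))) := by
      rw [hpsum, Finset.mul_sum]
    rw [← heq, hsplit, h3]
    linarith [key]
  calc v X ≤ v (X \ Q) + (k : ℝ) * (α * ∑ j ∈ Q, p j) := hfin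
    _ = v (X \ Q) + α * (k : ℝ) * ∑ j ∈ Q, p j := by ring
end

section
/- Let v_1,…,v_n be monotone valuations on M, let X* = (X*_1,…,X*_n) be an allocation, and for each i let w_i be the weights of a PH-k representative of v_i at X*_i. Define prices p(j) = (1/2)·Σ_{T : j∈T⊆X*_i} w_i(T)/|T| for j ∈ X*_i, and p(j) = 0 for items j not allocated by X*. Then for every buyer arrival order π and every sequential consumption outcome Y under prices p, Σ_i v_i(Y_i) ≥ (1/(4k))·Σ_i v_i(X*_i). -/
open MeasureTheory Finset

/-! ### Auxiliary lemmas for `full_information_welfare_MPH` -/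

lemma sum_swap_price_aux {M : Type*} [DecidableEq M] (P : Finset (Finset M)) (A : Finset M)
    (f : Finset M → ℝ) :
    ∑ j ∈ A, ∑ T ∈ P.filter (fun T => j ∈ T), f T
      = ∑ T ∈ P, ((A ∩ T).card : ℝ) * f T := by
  simp_rw [Finset.sum_filter]
  rw [Finset.sum_comm]
  refine Finset.sum_congr rfl fun T _ => ?_
  rw [← Finset.sum_filter, Finset.sum_const, Finset.filter_mem_eq_inter]
  simp [nsmul_eq_mul]

lemma PHfun_eq_sum_ite_aux {M : Type*} [Fintype M] [DecidableEq M] (w : Finset M → ℝ)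
    {A X : Finset M} (hAX : A ⊆ X) :
    PHfun w A = ∑ T ∈ X.powerset.erase ∅, if T ⊆ A then w T else 0 := by
  rw [← Finset.sum_filter]
  refine Finset.sum_congr ?_ (fun _ _ => rfl)
  ext T
  simp only [Finset.mem_erase, Finset.mem_powerset, Finset.mem_filter]
  exact ⟨fun ⟨h1, h2⟩ => ⟨⟨h1, h2.trans hAX⟩, h2⟩, fun ⟨⟨h1, _⟩, h2⟩ => ⟨h1, h2⟩⟩

lemma perT_arith_aux (k : ℕ) (hk : 1 ≤ k) (t a b : ℕ) (hab : a + b = t) (ht : 1 ≤ t)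
    (W I : ℝ) (hW : 0 ≤ W) (htk : W ≠ 0 → t ≤ k)
    (hcase : (b = 0 ∧ a = t ∧ I = W) ∨ (1 ≤ b ∧ I = 0)) :
    1/(4*(k:ℝ)) * W ≤ 1/(2*(k:ℝ)) * (I - 1/2 * ((a:ℝ) * (W/(t:ℝ)))) + 1/2 * ((b:ℝ) * (W/(t:ℝ))) := by
  have hk0 : (0:ℝ) < k := by exact_mod_cast hk
  have ht0 : (0:ℝ) < t := by exact_mod_cast ht
  rcases eq_or_lt_of_le hW with hW0 | hW0
  · rcases hcase with ⟨_, _, hI⟩ | ⟨_, hI⟩ <;> simp [hI, ← hW0]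
  · have htk' : (t:ℝ) ≤ k := by exact_mod_cast htk (ne_of_gt hW0)
    rcases hcase with ⟨hb, ha, hI⟩ | ⟨hb, hI⟩
    · subst hI
      rw [hb, ha]
      rw [Nat.cast_zero, mul_div_cancel₀ _ (ne_of_gt ht0)]
      ring_nf
      nlinarith [hW0, hk0]
    · subst hI
      have hb1 : (1:ℝ) ≤ b := by exact_mod_cast hb
      have habR : (a:ℝ) + b = t := by exact_mod_cast hab
      have htne : (t:ℝ) ≠ 0 := ne_of_gt ht0
      have hkne : (k:ℝ) ≠ 0 := ne_of_gt hk0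
      have key : (t:ℝ) * W ≤ (2*k*b - a) * W := by
        nlinarith [mul_le_mul_of_nonneg_left hb1 (le_of_lt hk0)]
      have hEq : 1/(2*(k:ℝ)) * (0 - 1/2 * ((a:ℝ) * (W/(t:ℝ)))) + 1/2 * ((b:ℝ) * (W/(t:ℝ)))
          = (2*(k:ℝ)*b - a) * W / (4*k*t) := by
        field_simp
        ring
      have hEq2 : 1/(4*(k:ℝ)) * W = (t:ℝ)*W/(4*k*t) := by
        field_simp
      rw [hEq, hEq2]
      gcongr

lemma per_buyer_aux {M : Type*} [Fintype M] [DecidableEq M] (k : ℕ) (hk : 1 ≤ k)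
    (v wi : Finset M → ℝ) (X A B : Finset M)
    (hw : IsPHRep k v wi X)
    (hU : A ∪ B = X) (hd : Disjoint A B)
    (p : M → ℝ)
    (hp : ∀ j ∈ X, p j = (1/2) * ∑ T ∈ X.powerset.filter (fun T => j ∈ T), wi T / (T.card : ℝ)) :
    1/(4*(k:ℝ)) * v X ≤ 1/(2*(k:ℝ)) * util v p A + ∑ j ∈ B, p j := by
  have hk0 : (0:ℝ) < k := by exact_mod_cast hk
  have hA : A ⊆ X := hU ▸ Finset.subset_union_left
  have hB : B ⊆ X := hU ▸ Finset.subset_union_right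
  have hsum : ∀ C : Finset M, C ⊆ X → ∑ j ∈ C, p j
      = (1/2) * ∑ T ∈ X.powerset.erase ∅, ((C ∩ T).card : ℝ) * (wi T / (T.card : ℝ)) := by
    intro C hC
    rw [Finset.sum_congr rfl (fun j hj => hp j (hC hj)), ← Finset.mul_sum, sum_swap_price_aux]
    congr 1
    rw [Finset.sum_erase _ (by simp)]
  have hkey : 1/(4*(k:ℝ)) * PHfun wi X
      ≤ 1/(2*(k:ℝ)) * (PHfun wi A - ∑ j ∈ A, p j) + ∑ j ∈ B, p j := by
    rw [hsum A hA, hsum B hB, PHfun_eq_sum_ite_aux wi hA]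
    unfold PHfun
    simp only [Finset.mul_sum, ← Finset.sum_sub_distrib, ← Finset.sum_add_distrib]
    refine Finset.sum_le_sum fun T hT => ?_
    obtain ⟨hTne, hTX⟩ := Finset.mem_erase.mp hT
    have hTX' : T ⊆ X := Finset.mem_powerset.mp hTX
    have hab : (A ∩ T).card + (B ∩ T).card = T.card := by
      rw [← Finset.card_union_of_disjoint (hd.mono inter_subset_left inter_subset_left)]
      congr 1
      rw [← Finset.union_inter_distrib_right, hU, Finset.inter_eq_right.mpr hTX']
    have ht : 1 ≤ T.card := Finset.card_pos.mpr (Finset.nonempty_iff_ne_empty.mpr hTne)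
    have hWn : 0 ≤ wi T := hw.1.1 T
    have htk : wi T ≠ 0 → T.card ≤ k := by
      intro h
      by_contra hc
      exact h (hw.1.2 T (lt_of_not_ge hc))
    have hcase : ((B ∩ T).card = 0 ∧ (A ∩ T).card = T.card ∧
          (if T ⊆ A then wi T else 0) = wi T) ∨
        (1 ≤ (B ∩ T).card ∧ (if T ⊆ A then wi T else 0) = 0) := by
      by_cases hTA : T ⊆ A
      · left
        refine ⟨?_, ?_, if_pos hTA⟩
        · rw [Finset.card_eq_zero, ← Finset.disjoint_iff_inter_eq_empty]
          exact hd.symm.mono_right hTA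
        · rw [Finset.inter_eq_right.mpr hTA]
      · right
        refine ⟨?_, if_neg hTA⟩
        rw [Nat.one_le_iff_ne_zero]
        intro hBT0
        rw [Finset.card_eq_zero, ← Finset.disjoint_iff_inter_eq_empty] at hBT0
        refine hTA fun x hx => ?_
        have hxX : x ∈ X := hTX' hx
        rw [← hU] at hxX
        rcases Finset.mem_union.mp hxX with h | h
        · exact h
        · exact absurd hx (Finset.disjoint_left.mp hBT0 h)
    exact perT_arith_aux k hk T.card (A ∩ T).card (B ∩ T).card hab ht (wi T) _ hWn htk hcase
  have h1 : PHfun wi A ≤ v A := hw.2.1 A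
  have h2 : v X = PHfun wi X := (hw.2.2).symm
  rw [h2]
  have h3 := mul_le_mul_of_nonneg_left (sub_le_sub_right h1 (∑ j ∈ A, p j))
    (le_of_lt (show (0:ℝ) < 1/(2*(k:ℝ)) by positivity))
  unfold util
  linarith [hkey, h3]

/-- full-information version for MPH-`k`. If `X*` is an
allocation with PH-`k` representative weights `w_i`, and each item `j ∈ X*_i`
is priced at `(1/2)·Σ_{T : j ∈ T ⊆ X*_i} w_i(T)/|T|` (unallocated items priced
`0`), then every sequential consumption outcome, for every arrival order,
obtains at least a `1/(4k)` fraction of the welfare of `X*`. -/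
theorem full_information_welfare_MPH
    {M : Type*} [Fintype M] [DecidableEq M] {n : ℕ}
    (k : ℕ) (hk : 1 ≤ k)
    (v : Fin n → Finset M → ℝ)
    (hv : ∀ i, IsValuation (v i))
    (Xs : Fin n → Finset M) (hXs : IsAllocation Xs)
    (w : Fin n → Finset M → ℝ)
    (hw : ∀ i, IsPHRep k (v i) (w i) (Xs i))
    (p : M → ℝ)
    (hpalloc : ∀ i : Fin n, ∀ j ∈ Xs i,
      p j = (1 / 2) * ∑ T ∈ (Xs i).powerset.filter (fun T => j ∈ T), w i T / (T.card : ℝ))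
    (hpfree : ∀ j : M, (∀ i, j ∉ Xs i) → p j = 0)
    (π : Equiv.Perm (Fin n)) (Y : Fin n → Finset M)
    (hY : IsSeqOutcome v p π Y) :
    (1 / (4 * (k : ℝ))) * ∑ i, v i (Xs i) ≤ ∑ i, v i (Y i)  := by
  classical
  have hk0 : (0:ℝ) < k := by exact_mod_cast hk
  have hk1 : (1:ℝ) ≤ k := by exact_mod_cast hk
  have hp0 : ∀ j, 0 ≤ p j := by
    intro j
    by_cases h : ∃ i, j ∈ Xs i
    · obtain ⟨i, hi⟩ := h
      rw [hpalloc i j hi]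
      apply mul_nonneg (by norm_num)
      exact Finset.sum_nonneg fun T _ => div_nonneg ((hw i).1.1 T) (Nat.cast_nonneg _)
    · push_neg at h
      exact le_of_eq (hpfree j h).symm
  have hYdisj : ∀ i i' : Fin n, i ≠ i' → Disjoint (Y i) (Y i') := by
    have key : ∀ i i' : Fin n, π i < π i' → Disjoint (Y i) (Y i') := by
      intro i i' h
      rw [Finset.disjoint_left]
      intro x hx hx'
      have h2 := (hY i').1 hx'
      simp only [availItems, Finset.mem_sdiff, Finset.mem_biUnion, Finset.mem_filter,
        Finset.mem_univ, true_and, not_exists, not_and] at h2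
      exact h2 i h hx
    intro i i' hne
    rcases lt_or_gt_of_ne (fun h : π i = π i' => hne (π.injective h)) with h | h
    · exact key i i' h
    · exact (key i' i h).symm
  have hAavail : ∀ i, Xs i \ Finset.univ.biUnion Y ⊆ availItems Y π i := by
    intro i x hx
    have hx2 := (Finset.mem_sdiff.mp hx).2
    simp only [availItems, Finset.mem_sdiff, Finset.mem_biUnion, Finset.mem_filter,
      Finset.mem_univ, true_and, not_exists, not_and]
    exact fun j _ hxY => hx2 (Finset.mem_biUnion.mpr ⟨j, Finset.mem_univ j, hxY⟩)
  have hut0 : ∀ i, 0 ≤ util (v i) p (Y i) := by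
    intro i
    have h := (hY i).2 ∅ (Finset.empty_subset _)
    simpa [util, (hv i).1] using h
  have hutA : ∀ i, 1/(2*(k:ℝ)) * util (v i) p (Xs i \ Finset.univ.biUnion Y)
      ≤ util (v i) p (Y i) := by
    intro i
    have h1 := (hY i).2 _ (hAavail i)
    have hα0 : (0:ℝ) ≤ 1/(2*k) := by positivity
    have hα1 : 1/(2*(k:ℝ)) ≤ 1 := by
      rw [div_le_one (by positivity)]
      linarith
    calc 1/(2*(k:ℝ)) * util (v i) p (Xs i \ Finset.univ.biUnion Y)
        ≤ 1/(2*(k:ℝ)) * util (v i) p (Y i) := mul_le_mul_of_nonneg_left h1 hα0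
      _ ≤ 1 * util (v i) p (Y i) := mul_le_mul_of_nonneg_right hα1 (hut0 i)
      _ = _ := one_mul _
  have hrev : ∑ i, ∑ j ∈ Xs i ∩ Finset.univ.biUnion Y, p j ≤ ∑ i, ∑ j ∈ Y i, p j := by
    rw [← Finset.sum_biUnion (fun i _ i' _ hne =>
        (hXs i i' hne).mono inter_subset_left inter_subset_left),
      ← Finset.sum_biUnion (fun i _ i' _ hne => hYdisj i i' hne)]
    apply Finset.sum_le_sum_of_subset_of_nonneg
    · intro x hx
      obtain ⟨i, _, hxB⟩ := Finset.mem_biUnion.mp hx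
      exact (Finset.mem_inter.mp hxB).2
    · exact fun j _ _ => hp0 j
  have hper : ∀ i, 1/(4*(k:ℝ)) * v i (Xs i)
      ≤ 1/(2*(k:ℝ)) * util (v i) p (Xs i \ Finset.univ.biUnion Y)
        + ∑ j ∈ Xs i ∩ Finset.univ.biUnion Y, p j :=
    fun i => per_buyer_aux k hk (v i) (w i) (Xs i) _ _ (hw i)
      (Finset.sdiff_union_inter _ _)
      (disjoint_sdiff_self_left.mono_right inter_subset_right) p (hpalloc i)
  calc 1/(4*(k:ℝ)) * ∑ i, v i (Xs i)
      = ∑ i, 1/(4*(k:ℝ)) * v i (Xs i) := Finset.mul_sum _ _ _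
    _ ≤ ∑ i, (1/(2*(k:ℝ)) * util (v i) p (Xs i \ Finset.univ.biUnion Y)
        + ∑ j ∈ Xs i ∩ Finset.univ.biUnion Y, p j) :=
        Finset.sum_le_sum fun i _ => hper i
    _ = (∑ i, 1/(2*(k:ℝ)) * util (v i) p (Xs i \ Finset.univ.biUnion Y))
        + ∑ i, ∑ j ∈ Xs i ∩ Finset.univ.biUnion Y, p j := Finset.sum_add_distrib
    _ ≤ (∑ i, util (v i) p (Y i)) + ∑ i, ∑ j ∈ Y i, p j :=
        add_le_add (Finset.sum_le_sum fun i _ => hutA i) hrev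
    _ = ∑ i, (util (v i) p (Y i) + ∑ j ∈ Y i, p j) := Finset.sum_add_distrib.symm
    _ = ∑ i, v i (Y i) := Finset.sum_congr rfl fun i _ => by simp [util]
end

section
/- Let M be a finite set of m ≥ 2 items and consider two buyers with valuations v_1(S) = 1 if S ≠ ∅ and v_1(S) = 0 otherwise (unit demand), and v_2(S) = m − 1 if S = M and v_2(S) = 0 otherwise (single-minded). Then the optimal social welfare is m − 1, yet for every price vector p : M → ℝ≥0, every sequential consumption outcome in which buyer 1 arrives before buyer 2 has social welfare at most 1. -/
open MeasureTheory Finset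

/-- lower bound example. With `m ≥ 2` items, a unit-demand
buyer `0` (value `1` for any nonempty bundle) and a single-minded buyer `1`
(value `m − 1` for the grand bundle, `0` otherwise), the optimal social
welfare equals `m − 1`, yet for every nonnegative item prices any sequential
consumption outcome in which buyer `0` arrives first has welfare at most `1`. -/
theorem mph_item_pricing_lower_bound
    {M : Type*} [Fintype M] [DecidableEq M]
    (hm : 2 ≤ Fintype.card M)
    (v : Fin 2 → Finset M → ℝ)
    (hv0 : ∀ S : Finset M, v 0 S = if S = ∅ then 0 else 1)
    (hv1 : ∀ S : Finset M,
      v 1 S = if S = Finset.univ then (Fintype.card M : ℝ) - 1 else 0) :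
    IsGreatest
        {sw : ℝ | ∃ X : Fin 2 → Finset M, IsAllocation X ∧ sw = ∑ i, v i (X i)}
        ((Fintype.card M : ℝ) - 1) ∧
      ∀ p : M → ℝ, (∀ j, 0 ≤ p j) →
        ∀ Y : Fin 2 → Finset M,
          IsSeqOutcome v p (Equiv.refl (Fin 2)) Y →
          ∑ i, v i (Y i) ≤ 1 := by

  have hcard : (1:ℝ) ≤ (Fintype.card M : ℝ) - 1 := by
    have : (2:ℝ) ≤ Fintype.card M := by exact_mod_cast hm
    linarith
  constructor
  · constructor
    · refine ⟨![∅, Finset.univ], ?_, ?_⟩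
      · intro i j hij
        fin_cases i <;> fin_cases j <;> simp_all
      · simp [Fin.sum_univ_two, hv0, hv1]
    · rintro sw ⟨X, hX, rfl⟩
      rw [Fin.sum_univ_two]
      by_cases h1 : X 1 = Finset.univ
      · have h0 : X 0 = ∅ := by
          have hd := hX 0 1 (by decide)
          rw [h1] at hd
          exact Finset.eq_empty_of_forall_notMem fun x hx =>
            (Finset.disjoint_left.mp hd hx) (Finset.mem_univ x)
        simp [hv0, hv1, h0, h1]
      · have h0 := hv0 (X 0)
        rw [hv1, if_neg h1, h0]
        split <;> linarith
  · intro p hp Y hY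
    have havail0 : availItems Y (Equiv.refl (Fin 2)) 0 = Finset.univ := by
      unfold availItems
      have h : (Finset.univ.filter fun j : Fin 2 =>
          (Equiv.refl (Fin 2)) j < (Equiv.refl (Fin 2)) 0) = ∅ := by decide
      rw [h]; simp
    have havail1 : availItems Y (Equiv.refl (Fin 2)) 1 = Finset.univ \ Y 0 := by
      unfold availItems
      have h : (Finset.univ.filter fun j : Fin 2 =>
          (Equiv.refl (Fin 2)) j < (Equiv.refl (Fin 2)) 1) = {0} := by decide
      rw [h]; simp
    obtain ⟨hY0sub, hY0max⟩ := hY 0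
    obtain ⟨hY1sub, hY1max⟩ := hY 1
    rw [Fin.sum_univ_two]
    by_cases h0 : Y 0 = ∅
    · have hp1 : ∀ j : M, 1 ≤ p j := by
        intro j
        have h := hY0max {j} (by rw [havail0]; exact Finset.subset_univ _)
        rw [h0] at h
        simp [util, hv0] at h
        linarith
      have hY1ne : Y 1 ≠ Finset.univ := by
        intro h
        have hu : util (v 1) p ∅ ≤ util (v 1) p (Y 1) :=
          hY1max ∅ (Finset.empty_subset _)
        rw [h] at hu
        simp [util, hv1] at hu
        have hne : (∅ : Finset M) ≠ Finset.univ := by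
          intro he
          have : Fintype.card M = 0 := by
            simpa [Finset.card_univ] using congrArg Finset.card he.symm
          omega
        rw [if_neg hne] at hu
        have hsum : (Fintype.card M : ℝ) ≤ ∑ j, p j := by
          calc (Fintype.card M : ℝ) = ∑ _j : M, (1:ℝ) := by simp
          _ ≤ ∑ j, p j := Finset.sum_le_sum fun j _ => hp1 j
        linarith
      rw [hv0, if_pos h0, hv1, if_neg hY1ne]
      norm_num
    · have hY1ne : Y 1 ≠ Finset.univ := by
        intro h
        have hsub := hY1sub
        rw [havail1, h] at hsub
        obtain ⟨x, hx⟩ := Finset.nonempty_iff_ne_empty.2 h0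
        have := hsub (Finset.mem_univ x)
        simp at this
        exact this hx
      rw [hv0, if_neg h0, hv1, if_neg hY1ne]
      norm_num
end
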